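/- The Adams consensus method fails condition (A4): there exist rooted trees T_1 with nontrivial clusters {a,b,c,e} and {a,b,c,d,e}, and T_2 with nontrivial clusters {b,c,d}, {b,c,d,e}, {a,b,c,d,e}, both on X = {a,b,c,d,e,f}, and Y = {b,c,d,e}, such that the Adams consensus of (T_1|Y, T_2|Y) contains the cluster {b,c}, while the restriction to Y of the Adams consensus of (T_1, T_2) does not contain {b,c}; in particular the former is neither equal to nor refined by the latter's relevant restriction. -/

import Mathlib

def IsHierarchyOn {α : Type*} [DecidableEq α] (X : Finset α) (T : Finset (Finset α)) : Prop :=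
  (∀ A ∈ T, A ⊆ X ∧ A.Nonempty) ∧ X ∈ T ∧ (∀ x ∈ X, ({x} : Finset α) ∈ T) ∧
  ∀ A ∈ T, ∀ B ∈ T, A ∩ B = ∅ ∨ A ⊆ B ∨ B ⊆ A

def restrict {α : Type*} [DecidableEq α] (T : Finset (Finset α)) (W : Finset α) :
    Finset (Finset α) :=
  (T.image (· ∩ W)).filter (·.Nonempty)

/-- The maximal proper clusters of a tree on `X` (the children of the root). -/
def maxProper {α : Type*} [DecidableEq α] (X : Finset α) (T : Finset (Finset α)) :
    Finset (Finset α) :=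
  T.filter fun A => A ≠ X ∧ ∀ B ∈ T, A ⊆ B → B = A ∨ B = X

/-- The defining recursion of the Adams consensus of two trees on a common leaf set `X`:
it is a hierarchy on `X`, its maximal proper clusters are the nonempty pairwise
intersections of maximal proper clusters of the two inputs, and within each such part the
construction recurses on the restricted trees. -/
def AdamsSpec {α : Type*} [DecidableEq α]
    (adams : Finset (Finset α) → Finset (Finset α) → Finset (Finset α)) : Prop :=
  ∀ (X : Finset α) (T₁ T₂ : Finset (Finset α)),
    IsHierarchyOn X T₁ → IsHierarchyOn X T₂ →
      IsHierarchyOn X (adams T₁ T₂) ∧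
      ((maxProper X (adams T₁ T₂) : Set (Finset α)) =
        {Q | Q.Nonempty ∧ ∃ P₁ ∈ maxProper X T₁, ∃ P₂ ∈ maxProper X T₂, Q = P₁ ∩ P₂}) ∧
      ∀ Q ∈ maxProper X (adams T₁ T₂),
        restrict (adams T₁ T₂) Q = adams (restrict T₁ Q) (restrict T₂ Q)

/-!
Both consensus trees are computed by unfolding the Adams recursion. On `Y`, the maximal
clusters `{b,c,e}, {d}` of `T₁|Y` and `{b,c,d}, {e}` of `T₂|Y` meet in `{b,c}`, which is
therefore a maximal cluster of the consensus. On `X` the recursion passes through the parts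
`{a,b,c,d,e}` and then `{b,c,e}`; a consensus cluster `C` with `C ∩ Y = {b,c}` contains `b`
and misses `d`, resp. `e`, so it is nested in both parts and survives to the consensus on
`{b,c,e}`. There `T₁` is a star, so the consensus is a star too and has no cluster containing
both `b` and `c` other than `{b,c,e}`.
-/

open Finset

variable {α : Type*} [DecidableEq α]

theorem IsHierarchyOn.subset_of_mem_of_notMem {X : Finset α} {T : Finset (Finset α)}
    (hT : IsHierarchyOn X T) {A B : Finset α} (hA : A ∈ T) (hB : B ∈ T) {x y : α}
    (hxA : x ∈ A) (hxB : x ∈ B) (hyB : y ∈ B) (hyA : y ∉ A) : A ⊆ B := by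
  rcases hT.2.2.2 A hA B hB with h | h | h
  · exact absurd (h ▸ mem_inter.2 ⟨hxA, hxB⟩) (notMem_empty x)
  · exact h
  · exact absurd (h hyB) hyA

theorem IsHierarchyOn.restrict {X Q : Finset α} {T : Finset (Finset α)}
    (hT : IsHierarchyOn X T) (hQX : Q ⊆ X) (hQ : Q.Nonempty) :
    IsHierarchyOn Q (restrict T Q) := by
  obtain ⟨-, hXT, hsingle, hnest⟩ := hT
  simp only [IsHierarchyOn, _root_.restrict, mem_filter, mem_image]
  refine ⟨?_, ⟨⟨X, hXT, inter_eq_right.2 hQX⟩, hQ⟩, ?_, ?_⟩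
  · rintro _ ⟨⟨A, -, rfl⟩, hne⟩
    exact ⟨inter_subset_right, hne⟩
  · intro x hx
    exact ⟨⟨{x}, hsingle x (hQX hx), by simpa using hx⟩, singleton_nonempty x⟩
  · rintro _ ⟨⟨A, hA, rfl⟩, -⟩ _ ⟨⟨B, hB, rfl⟩, -⟩
    rcases hnest A hA B hB with h | h | h
    · left
      rw [inter_inter_inter_comm, h, empty_inter]
    · exact Or.inr (Or.inl (inter_subset_inter_right h))
    · exact Or.inr (Or.inr (inter_subset_inter_right h))

theorem mem_of_mem_maxProper {X A : Finset α} {T : Finset (Finset α)} (h : A ∈ maxProper X T) :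
    A ∈ T :=
  (mem_filter.1 h).1

theorem exists_superset_mem_maxProper {X A : Finset α} {T : Finset (Finset α)} (hA : A ∈ T)
    (hAX : A ≠ X) : ∃ M ∈ maxProper X T, A ⊆ M := by
  obtain ⟨M, hM, hmax⟩ := (T.filter fun B => A ⊆ B ∧ B ≠ X).exists_maximal
    ⟨A, mem_filter.2 ⟨hA, subset_rfl, hAX⟩⟩
  obtain ⟨hMT, hAM, hMX⟩ := mem_filter.1 hM
  refine ⟨M, mem_filter.2 ⟨hMT, hMX, fun B hB hMB => ?_⟩, hAM⟩
  by_cases hBX : B = X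
  · exact Or.inr hBX
  · exact Or.inl (le_antisymm (hmax (mem_filter.2 ⟨hB, hAM.trans hMB, hBX⟩) hMB) hMB)

namespace AdamsSpec

variable {adams : Finset (Finset α) → Finset (Finset α) → Finset (Finset α)}
  (hadams : AdamsSpec adams) {X : Finset α} {T₁ T₂ : Finset (Finset α)}
  (h₁ : IsHierarchyOn X T₁) (h₂ : IsHierarchyOn X T₂)
include hadams h₁ h₂

theorem mem_maxProper {P₁ P₂ Q : Finset α} (hP₁ : P₁ ∈ maxProper X T₁)
    (hP₂ : P₂ ∈ maxProper X T₂) (hQ : P₁ ∩ P₂ = Q) (hQne : Q.Nonempty) :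
    Q ∈ maxProper X (adams T₁ T₂) := by
  rw [← mem_coe, (hadams X T₁ T₂ h₁ h₂).2.1]
  exact ⟨hQne, P₁, hP₁, P₂, hP₂, hQ.symm⟩

theorem exists_maxProper_left_superset {C : Finset α} (hC : C ∈ adams T₁ T₂) (hCX : C ≠ X) :
    ∃ P ∈ maxProper X T₁, C ⊆ P := by
  obtain ⟨M, hM, hCM⟩ := exists_superset_mem_maxProper hC hCX
  rw [← mem_coe, (hadams X T₁ T₂ h₁ h₂).2.1] at hM
  obtain ⟨-, P₁, hP₁, P₂, -, rfl⟩ := hM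
  exact ⟨P₁, hP₁, hCM.trans inter_subset_left⟩

theorem mem_restrict_of_mem {P₁ P₂ Q C : Finset α} (hP₁ : P₁ ∈ maxProper X T₁)
    (hP₂ : P₂ ∈ maxProper X T₂) (hQ : P₁ ∩ P₂ = Q) (hC : C ∈ adams T₁ T₂) {x y : α}
    (hxC : x ∈ C) (hxQ : x ∈ Q) (hyQ : y ∈ Q) (hyC : y ∉ C) :
    C ∈ adams (restrict T₁ Q) (restrict T₂ Q) := by
  have hQmax := hadams.mem_maxProper h₁ h₂ hP₁ hP₂ hQ ⟨x, hxQ⟩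
  obtain ⟨hH, -, hrec⟩ := hadams X T₁ T₂ h₁ h₂
  have hCQ : C ⊆ Q := hH.subset_of_mem_of_notMem hC (mem_of_mem_maxProper hQmax) hxC hxQ hyQ hyC
  rw [← hrec Q hQmax, _root_.restrict, mem_filter, mem_image]
  exact ⟨⟨C, hC, inter_eq_left.2 hCQ⟩, x, hxC⟩

end AdamsSpec

set_option maxRecDepth 10000 in
/-- Adams consensus fails (A4): with `a,…,f = 0,…,5`, for `T₁` with nontrivial clusters
`{a,b,c,e}`, `{a,b,c,d,e}`, `T₂` with nontrivial clusters `{b,c,d}`, `{b,c,d,e}`,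
`{a,b,c,d,e}`, and `Y = {b,c,d,e}`, the Adams consensus of `(T₁|Y, T₂|Y)` contains the
cluster `{b,c}` but the restriction to `Y` of the Adams consensus of `(T₁, T₂)` does not;
in particular the former is not refined by the latter. -/
theorem stmt_17 (adams : Finset (Finset (Fin 6)) → Finset (Finset (Fin 6)) → Finset (Finset (Fin 6)))
    (hadams : AdamsSpec adams) :
    let X : Finset (Fin 6) := {0, 1, 2, 3, 4, 5}
    let T₁ : Finset (Finset (Fin 6)) :=
      {{0, 1, 2, 4}, {0, 1, 2, 3, 4}, X, {0}, {1}, {2}, {3}, {4}, {5}}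
    let T₂ : Finset (Finset (Fin 6)) :=
      {{1, 2, 3}, {1, 2, 3, 4}, {0, 1, 2, 3, 4}, X, {0}, {1}, {2}, {3}, {4}, {5}}
    let Y : Finset (Fin 6) := {1, 2, 3, 4}
    ({1, 2} : Finset (Fin 6)) ∈ adams (restrict T₁ Y) (restrict T₂ Y) ∧
    ({1, 2} : Finset (Fin 6)) ∉ restrict (adams T₁ T₂) Y ∧
    ¬ adams (restrict T₁ Y) (restrict T₂ Y) ⊆ restrict (adams T₁ T₂) Y := by
  intro X T₁ T₂ Y
  have h₁ : IsHierarchyOn X T₁ := by unfold IsHierarchyOn; decide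
  have h₂ : IsHierarchyOn X T₂ := by unfold IsHierarchyOn; decide
  have mem_Y : ({1, 2} : Finset (Fin 6)) ∈ adams (restrict T₁ Y) (restrict T₂ Y) :=
    mem_of_mem_maxProper <| hadams.mem_maxProper (h₁.restrict (by decide) (by decide))
      (h₂.restrict (by decide) (by decide)) (P₁ := {1, 2, 4}) (P₂ := {1, 2, 3})
      (by decide) (by decide) (by decide) (by decide)
  have not_mem_X : ({1, 2} : Finset (Fin 6)) ∉ restrict (adams T₁ T₂) Y := by
    intro hmem
    simp only [_root_.restrict, mem_filter, mem_image] at hmem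
    obtain ⟨⟨C, hC, hCY⟩, -⟩ := hmem
    have hCY' : ∀ z ∈ Y, z ∈ C → z ∈ ({1, 2} : Finset (Fin 6)) := fun z hzY hzC =>
      hCY ▸ mem_inter.2 ⟨hzC, hzY⟩
    have h1 : (1 : Fin 6) ∈ C := (hCY ▸ inter_subset_left : _ ⊆ C) (by decide)
    have h2 : (2 : Fin 6) ∈ C := (hCY ▸ inter_subset_left : _ ⊆ C) (by decide)
    have h3 : (3 : Fin 6) ∉ C := fun h => absurd (hCY' 3 (by decide) h) (by decide)
    have h4 : (4 : Fin 6) ∉ C := fun h => absurd (hCY' 4 (by decide) h) (by decide)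
    set A : Finset (Fin 6) := {0, 1, 2, 3, 4}
    set B : Finset (Fin 6) := {1, 2, 4}
    have hA₁ := h₁.restrict (Q := A) (by decide) (by decide)
    have hA₂ := h₂.restrict (Q := A) (by decide) (by decide)
    have hCA : C ∈ adams (restrict T₁ A) (restrict T₂ A) :=
      hadams.mem_restrict_of_mem h₁ h₂ (P₁ := A) (P₂ := A) (by decide) (by decide) (by decide)
        hC h1 (by decide) (by decide) h3
    have hCB : C ∈ adams (restrict (restrict T₁ A) B) (restrict (restrict T₂ A) B) :=
      hadams.mem_restrict_of_mem hA₁ hA₂ (P₁ := {0, 1, 2, 4}) (P₂ := {1, 2, 3, 4})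
        (by decide) (by decide) (by decide) hCA h1 (by decide) (by decide) h4
    obtain ⟨P, hP, hCP⟩ := hadams.exists_maxProper_left_superset
      (hA₁.restrict (Q := B) (by decide) (by decide))
      (hA₂.restrict (Q := B) (by decide) (by decide)) hCB
      fun hCB => h4 (hCB ▸ (by decide : (4 : Fin 6) ∈ B))
    have star : ∀ P ∈ maxProper B (restrict (restrict T₁ A) B), ¬ ((1 : Fin 6) ∈ P ∧ 2 ∈ P) := by
      decide
    exact star P hP ⟨hCP h1, hCP h2⟩
  exact ⟨mem_Y, not_mem_X, fun h => not_mem_X (h mem_Y)⟩
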